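/- arXiv:0907.0975 — 5 statements merged into one kernel-verified Lean document; each statement's English description precedes it below -/
import Mathlib

section
/- Let X be a metric space, μ a regular σ-finite Borel measure, F: X → X a μ-preserving transformation, and f ∈ L²(μ). If f is continuous with compact support, then any weak limit g of a subsequence f∘F^{n_i} in L²(μ) is W^s-invariant: there is a full-measure set Ω such that for x, y ∈ Ω with d(F^n x, F^n y) → 0 one has g(x) = g(y). -/
/-!
A weakly convergent sequence in a Hilbert space has a subsequence whose Cesàro averages converge
in norm (Banach–Saks): pick each new term almost orthogonal to all earlier ones, so that the
norm of a partial sum of `k` centred terms grows like `√k`. A further subsequence of these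
averages of `f ∘ F^[n i]` converges almost everywhere to `g`. For a stable pair `x, y`, uniform
continuity of `f` gives `f (F^[m] x) - f (F^[m] y) → 0`, hence the averages at `x` and at `y`
have the same limit.
-/

open MeasureTheory Filter Topology Set Function

open scoped RealInnerProductSpace Uniformity

theorem Filter.extraction_succ_of_eventually {P : ℕ → ℕ → Prop}
    (h : ∀ m, ∀ᶠ i in atTop, P m i) :
    ∃ φ : ℕ → ℕ, StrictMono φ ∧ ∀ k, P (φ k) (φ (k + 1)) := by
  choose next hP hlt using fun m => ((h m).and (eventually_gt_atTop m)).exists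
  let φ : ℕ → ℕ := fun k => Nat.rec 0 (fun _ m => next m) k
  exact ⟨φ, strictMono_nat_of_lt_succ fun k => hlt (φ k), fun k => hP (φ k)⟩

section InnerProductSpace

variable {E : Type*} [NormedAddCommGroup E] [InnerProductSpace ℝ E]

theorem exists_strictMono_inner_sum_range_le_one {w : ℕ → E}
    (hw : ∀ h, Tendsto (fun i => ⟪w i, h⟫) atTop (𝓝 0)) :
    ∃ φ : ℕ → ℕ, StrictMono φ ∧
      ∀ k, ⟪∑ j ∈ Finset.range k, w (φ j), w (φ k)⟫ ≤ 1 := by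
  have hsmall : ∀ m, ∀ᶠ i in atTop, ∀ j ∈ Finset.range (m + 1),
      ⟪w j, w i⟫ ≤ 1 / (m + 1) := fun m => by
    rw [eventually_all_finset]
    intro j _
    simpa only [real_inner_comm] using
      (hw (w j)).eventually_le_const (by positivity : (0 : ℝ) < 1 / (m + 1))
  obtain ⟨φ, hφ, hφsmall⟩ := extraction_succ_of_eventually hsmall
  refine ⟨φ, hφ, fun k => ?_⟩
  cases k with
  | zero => simp
  | succ k =>
    have hterm : ∀ j ∈ Finset.range (k + 1), ⟪w (φ j), w (φ (k + 1))⟫ ≤ 1 / (φ k + 1) :=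
      fun j hj => hφsmall k (φ j) (Finset.mem_range_succ_iff.2
        (hφ.monotone (Finset.mem_range_succ_iff.1 hj)))
    have hk : ((k : ℝ) + 1) ≤ φ k + 1 := by exact_mod_cast Nat.succ_le_succ (hφ.id_le k)
    calc ⟪∑ j ∈ Finset.range (k + 1), w (φ j), w (φ (k + 1))⟫
        = ∑ j ∈ Finset.range (k + 1), ⟪w (φ j), w (φ (k + 1))⟫ := sum_inner _ _ _
      _ ≤ (k + 1) * (1 / (φ k + 1)) := by
        simpa using Finset.sum_le_card_nsmul _ _ _ hterm
      _ ≤ 1 := by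
        rw [mul_one_div, div_le_one (by positivity)]
        exact hk

theorem norm_sum_range_sq_le {v : ℕ → E} {C : ℝ} (hC : ∀ k, ‖v k‖ ^ 2 ≤ C)
    (hinner : ∀ k, ⟪∑ j ∈ Finset.range k, v j, v k⟫ ≤ 1) (n : ℕ) :
    ‖∑ j ∈ Finset.range n, v j‖ ^ 2 ≤ n * (C + 2) := by
  induction n with
  | zero => simp
  | succ n ih =>
    rw [Finset.sum_range_succ, norm_add_sq_real]
    push_cast
    linarith [hC n, hinner n]

theorem tendsto_cesaro_zero_of_inner_sum_range_le_one {v : ℕ → E} {C : ℝ}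
    (hC : ∀ k, ‖v k‖ ^ 2 ≤ C) (hinner : ∀ k, ⟪∑ j ∈ Finset.range k, v j, v k⟫ ≤ 1) :
    Tendsto (fun n : ℕ => (n : ℝ)⁻¹ • ∑ j ∈ Finset.range n, v j) atTop (𝓝 0) := by
  have hsq : ∀ n : ℕ, ‖(n : ℝ)⁻¹ • ∑ j ∈ Finset.range n, v j‖ ^ 2 ≤ (C + 2) * (n : ℝ)⁻¹ := by
    intro n
    rw [norm_smul, mul_pow, norm_inv, Real.norm_natCast]
    calc (n : ℝ)⁻¹ ^ 2 * ‖∑ j ∈ Finset.range n, v j‖ ^ 2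
        ≤ (n : ℝ)⁻¹ ^ 2 * (n * (C + 2)) := by
          gcongr
          exact norm_sum_range_sq_le hC hinner n
      _ = (C + 2) * (n : ℝ)⁻¹ := by
          rcases eq_or_ne (n : ℝ) 0 with hn | hn
          · simp [hn]
          · field_simp
  have hlim : Tendsto (fun n : ℕ => (C + 2) * (n : ℝ)⁻¹) atTop (𝓝 0) := by
    simpa using (tendsto_inv_atTop_nhds_zero_nat (𝕜 := ℝ)).const_mul (C + 2)
  rw [tendsto_zero_iff_norm_tendsto_zero]
  have := (squeeze_zero (fun n => by positivity) hsq hlim).sqrt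
  simpa [Real.sqrt_sq (norm_nonneg _)] using this

theorem exists_strictMono_tendsto_cesaro_of_tendsto_inner {u : ℕ → E} {g : E} {M : ℝ}
    (hweak : ∀ h, Tendsto (fun i => ⟪u i, h⟫) atTop (𝓝 ⟪g, h⟫)) (hM : ∀ i, ‖u i‖ ≤ M) :
    ∃ φ : ℕ → ℕ, StrictMono φ ∧
      Tendsto (fun n : ℕ => (n : ℝ)⁻¹ • ∑ j ∈ Finset.range n, u (φ j)) atTop (𝓝 g) := by
  have hw : ∀ h, Tendsto (fun i => ⟪u i - g, h⟫) atTop (𝓝 0) := fun h => by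
    simpa only [inner_sub_left, sub_self] using (hweak h).sub_const ⟪g, h⟫
  obtain ⟨φ, hφ, hinner⟩ := exists_strictMono_inner_sum_range_le_one hw
  refine ⟨φ, hφ, ?_⟩
  have hC : ∀ k, ‖u (φ k) - g‖ ^ 2 ≤ (M + ‖g‖) ^ 2 := fun k => by
    gcongr
    exact (norm_sub_le _ _).trans (by gcongr; exact hM _)
  have hlim := (tendsto_cesaro_zero_of_inner_sum_range_le_one hC hinner).add_const g
  rw [zero_add] at hlim
  refine hlim.congr' ?_
  filter_upwards [eventually_ne_atTop 0] with n hn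
  rw [Finset.sum_sub_distrib, smul_sub, Finset.sum_const, Finset.card_range,
    ← Nat.cast_smul_eq_nsmul ℝ, smul_smul, inv_mul_cancel₀ (by exact_mod_cast hn), one_smul,
    sub_add_cancel]

end InnerProductSpace

namespace MeasureTheory

variable {α : Type*} [MeasurableSpace α] {μ : Measure α}

theorem L2.real_inner_eq_integral (v w : Lp ℝ 2 μ) : ⟪v, w⟫ = ∫ x, v x * w x ∂μ := by
  simp [L2.inner_def, mul_comm]

theorem L2.real_inner_toLp_left {φ : α → ℝ} (hφ : MemLp φ 2 μ) (w : Lp ℝ 2 μ) :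
    ⟪hφ.toLp φ, w⟫ = ∫ x, φ x * w x ∂μ := by
  rw [real_inner_eq_integral]
  exact integral_congr_ae (hφ.coeFn_toLp.mul EventuallyEq.rfl)

theorem exists_strictMono_ae_tendsto_cesaro {E : Type*} [NormedAddCommGroup E] [NormedSpace ℝ E]
    {p : ENNReal} [Fact (1 ≤ p)] {v : ℕ → α → E} (hv : ∀ j, MemLp (v j) p μ) {g : Lp E p μ}
    (h : Tendsto (fun n : ℕ => (n : ℝ)⁻¹ • ∑ j ∈ Finset.range n, (hv j).toLp (v j)) atTop (𝓝 g)) :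
    ∃ ψ : ℕ → ℕ, StrictMono ψ ∧ ∀ᵐ x ∂μ,
      Tendsto (fun m => (ψ m : ℝ)⁻¹ • ∑ j ∈ Finset.range (ψ m), v j x) atTop (𝓝 (g x)) := by
  have hcoe : ∀ n : ℕ, ⇑((n : ℝ)⁻¹ • ∑ j ∈ Finset.range n, (hv j).toLp (v j)) =ᵐ[μ]
      fun x => (n : ℝ)⁻¹ • ∑ j ∈ Finset.range n, v j x := fun n => by
    have hterms : ∀ᵐ x ∂μ, ∀ j, (hv j).toLp (v j) x = v j x :=
      ae_all_iff.2 fun j => (hv j).coeFn_toLp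
    filter_upwards [Lp.coeFn_smul (n : ℝ)⁻¹ (∑ j ∈ Finset.range n, (hv j).toLp (v j)),
      Lp.coeFn_fun_finsetSum (Finset.range n) fun j => (hv j).toLp (v j), hterms]
      with x hsmul hsum hj
    simp only [hsmul, Pi.smul_apply, hsum, hj]
  exact ((tendstoInMeasure_of_tendsto_Lp h).congr_left hcoe).exists_seq_tendsto_ae

end MeasureTheory

theorem UniformContinuous.tendsto_sub_of_tendsto_dist {X E ι : Type*} [PseudoMetricSpace X]
    [SeminormedAddCommGroup E] {f : X → E} (hf : UniformContinuous f) {l : Filter ι}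
    {a b : ι → X} (h : Tendsto (fun i => dist (a i) (b i)) l (𝓝 0)) :
    Tendsto (fun i => f (a i) - f (b i)) l (𝓝 0) := by
  have hab : Tendsto (fun i => (a i, b i)) l (𝓤 X) :=
    tendsto_uniformity_iff_dist_tendsto_zero.2 h
  rw [tendsto_zero_iff_norm_tendsto_zero]
  simpa only [dist_eq_norm, comp_apply] using
    tendsto_uniformity_iff_dist_tendsto_zero.1 (Tendsto.comp hf hab)

theorem exists_ae_eq_forall_eq_of_tendsto_sub {α E : Type*} [MeasurableSpace α] {μ : Measure α}
    [NormedAddCommGroup E] {a : ℕ → α → E} {G : α → E}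
    (hG : ∀ᵐ x ∂μ, Tendsto (fun m => a m x) atTop (𝓝 (G x))) {R : α → α → Prop}
    (hR : ∀ x y, R x y → Tendsto (fun m => a m x - a m y) atTop (𝓝 0)) :
    ∃ g₀ : α → E, G =ᵐ[μ] g₀ ∧ ∃ Ω : Set α, μ Ωᶜ = 0 ∧
      ∀ x ∈ Ω, ∀ y ∈ Ω, R x y → g₀ x = g₀ y := by
  refine ⟨fun x => limUnder atTop fun m => a m x, ?_,
    {x | ∃ l, Tendsto (fun m => a m x) atTop (𝓝 l)}, ?_, ?_⟩
  · filter_upwards [hG] with x hx using hx.limUnder_eq.symm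
  · exact measure_mono_null (fun x hx h => hx ⟨G x, h⟩) (ae_iff.1 hG)
  · rintro x ⟨lx, hx⟩ y ⟨ly, hy⟩ hxy
    show limUnder atTop (fun m => a m x) = limUnder atTop (fun m => a m y)
    rw [hx.limUnder_eq, hy.limUnder_eq, ← sub_eq_zero]
    exact tendsto_nhds_unique (hx.sub hy) (hR x y hxy)

theorem weak_limit_Ws_invariant_of_continuous_general {X : Type*} [MetricSpace X]
    [MeasurableSpace X] [BorelSpace X]
    (μ : Measure X) [μ.Regular]
    (F : X → X) (hmp : MeasurePreserving F μ μ)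
    (f : X → ℝ) (hfc : Continuous f) (hfs : HasCompactSupport f)
    (g : Lp ℝ 2 μ) (n : ℕ → ℕ) (hn : StrictMono n)
    (hweak : ∀ h : Lp ℝ 2 μ,
      Tendsto (fun i : ℕ => ∫ x, f (F^[n i] x) * (h : X → ℝ) x ∂μ) atTop
        (𝓝 (∫ x, (g : X → ℝ) x * (h : X → ℝ) x ∂μ))) :
    ∃ g₀ : X → ℝ, (g : X → ℝ) =ᵐ[μ] g₀ ∧
      ∃ Ω : Set X, μ Ωᶜ = 0 ∧
        ∀ x ∈ Ω, ∀ y ∈ Ω,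
          Tendsto (fun k : ℕ => dist (F^[k] x) (F^[k] y)) atTop (𝓝 0) →
          g₀ x = g₀ y := by
  have hf : MemLp f 2 μ := hfc.memLp_of_hasCompactSupport hfs
  have hfn : ∀ i, MemLp (f ∘ F^[n i]) 2 μ := fun i => hf.comp_measurePreserving (hmp.iterate _)
  have hweak' : ∀ h : Lp ℝ 2 μ,
      Tendsto (fun i => ⟪(hfn i).toLp _, h⟫) atTop (𝓝 ⟪g, h⟫) := fun h => by
    simp_rw [L2.real_inner_toLp_left, L2.real_inner_eq_integral, comp_apply]
    exact hweak h
  have hnorm : ∀ i, ‖(hfn i).toLp _‖ ≤ ‖hf.toLp f‖ := fun i =>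
    (Lp.norm_compMeasurePreserving (hf.toLp f) (hmp.iterate (n i))).le
  obtain ⟨φ, hφ, hcesaro⟩ := exists_strictMono_tendsto_cesaro_of_tendsto_inner hweak' hnorm
  obtain ⟨ψ, hψ, hae⟩ := exists_strictMono_ae_tendsto_cesaro (fun j => hfn (φ j)) hcesaro
  refine exists_ae_eq_forall_eq_of_tendsto_sub hae fun x y hxy => ?_
  have hdiff : Tendsto (fun j => f (F^[n (φ j)] x) - f (F^[n (φ j)] y)) atTop (𝓝 0) :=
    (hfc.uniformContinuous_of_tendsto_cocompact hfs.is_zero_at_infty).tendsto_sub_of_tendsto_dist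
      (hxy.comp (hn.comp hφ).tendsto_atTop)
  simpa only [smul_sub, Finset.sum_sub_distrib, comp_def] using
    hdiff.cesaro_smul.comp hψ.tendsto_atTop

/-- Let `X` be a metric space, `μ` a regular σ-finite Borel measure, `F` a
`μ`-preserving transformation and `f` continuous with compact support (in `L²`).
Then any weak limit `g` in `L²(μ)` of a subsequence `f ∘ F^{nᵢ}` is `Wˢ`-invariant:
there is a full-measure set `Ω` such that for `x, y ∈ Ω` with
`d(Fⁿ x, Fⁿ y) → 0` one has `g(x) = g(y)`. -/
theorem weak_limit_Ws_invariant_of_continuous {X : Type*} [MetricSpace X]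
    [MeasurableSpace X] [BorelSpace X]
    (μ : Measure X) [SigmaFinite μ] [μ.Regular]
    (F : X → X) (hFmeas : Measurable F) (hmp : MeasurePreserving F μ μ)
    (f : X → ℝ) (hfc : Continuous f) (hfs : HasCompactSupport f)
    (g : Lp ℝ 2 μ) (n : ℕ → ℕ) (hn : StrictMono n)
    (hweak : ∀ h : Lp ℝ 2 μ,
      Tendsto (fun i : ℕ => ∫ x, f (F^[n i] x) * (h : X → ℝ) x ∂μ) atTop
        (𝓝 (∫ x, (g : X → ℝ) x * (h : X → ℝ) x ∂μ))) :
    ∃ g₀ : X → ℝ, (g : X → ℝ) =ᵐ[μ] g₀ ∧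
      ∃ Ω : Set X, μ Ωᶜ = 0 ∧
        ∀ x ∈ Ω, ∀ y ∈ Ω,
          Tendsto (fun k : ℕ => dist (F^[k] x) (F^[k] y)) atTop (𝓝 0) →
          g₀ x = g₀ y :=
  weak_limit_Ws_invariant_of_continuous_general μ F hmp f hfc hfs g n hn hweak
end

section
/- Let X be a metric space, μ a regular σ-finite Borel measure, F a μ-preserving transformation, and f ∈ L²(μ). Then any weak limit of a subsequence f∘F^{n_i} in L²(μ) is W^s-invariant. -/
/-!
By Mazur's lemma the weak limit `g` lies in the closed convex hull of every tail
`{f ∘ F^[n j] | N ≤ j}`. Approximate `f` in `L²` by a Lipschitz `φ` with `‖f - φ‖ ≤ ε`; since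
composition with `F^[n j]` is an isometry, `g` lies within `ε` of each of the nested convex sets
spanned by the tails of `φ ∘ F^[n j]`, and the parallelogram law produces a single `ψ` in the
closure of all of them with `‖ψ - g‖ ≤ ε`. Members of the `N`-th set have representatives `u` with
`|u x - u y| ≤ Lip(φ) * sup_{m ≥ N} d(F^m x, F^m y)`, so `ψ` is `Wˢ`-invariant. Finally,
`Wˢ`-invariance survives a.e. limits, hence `L²` limits, and `ψ → g` as `ε → 0`.
-/

open MeasureTheory Filter Topology Set Function Metric
open scoped ENNReal NNReal RealInnerProductSpace

namespace MeasureTheory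

section LipschitzDense

variable {X E : Type*} [MetricSpace X] [MeasurableSpace X] [OpensMeasurableSpace X]
  [NormedAddCommGroup E] [NormedSpace ℝ E] {μ : Measure X} [μ.OuterRegular]
  [μ.InnerRegularCompactLTTop] {p : ℝ≥0∞}

theorem exists_lipschitzWith_eLpNorm_sub_indicator_le (hp : p ≠ ∞) (c : E) {s : Set X}
    (hs : MeasurableSet s) (hμs : μ s < ∞) {ε : ℝ≥0∞} (hε : ε ≠ 0) :
    ∃ g : X → E, eLpNorm (g - s.indicator fun _ => c) p μ ≤ ε ∧
      (∃ L, LipschitzWith L g) ∧ MemLp g p μ := by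
  obtain ⟨η, hη, hηε⟩ := exists_eLpNorm_indicator_le (μ := μ) hp c hε
  have hη2 : (η : ℝ≥0∞) / 2 ≠ 0 := by simpa using hη.ne'
  obtain ⟨K, hKs, hK, hμK⟩ := hs.exists_isCompact_sdiff_lt hμs.ne hη2
  obtain ⟨U, hsU, hU, hμU, hμUs⟩ := hs.exists_isOpen_sdiff_lt hμs.ne hη2
  obtain ⟨δ, hδ, hKδU⟩ := hK.exists_thickening_subset_open hU (hKs.trans hsU)
  set g : X → E := fun x => (thickenedIndicator hδ K x : ℝ) • c
  have hg_lip : LipschitzWith _ g :=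
    ((ContinuousLinearMap.smulRight (1 : ℝ →L[ℝ] ℝ) c).lipschitz.comp
      NNReal.isometry_coe.lipschitz).comp (lipschitzWith_thickenedIndicator hδ K)
  have hg_meas : AEStronglyMeasurable g μ :=
    (by fun_prop : Continuous fun t : ℝ≥0 => (t : ℝ) • c).comp_aestronglyMeasurable
      (thickenedIndicator hδ K).continuous.aestronglyMeasurable
  have hg_sub : ∀ x,
      ‖g x - s.indicator (fun _ => c) x‖ ≤ ‖(U \ K).indicator (fun _ => c) x‖ := by
    intro x
    by_cases hxK : x ∈ K
    · simp only [g, thickenedIndicator_one hδ K hxK, indicator_of_mem (hKs hxK)]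
      simp
    by_cases hxU : x ∈ U
    swap
    · have hxδ : x ∉ thickening δ K := fun h => hxU (hKδU h)
      simp only [g, thickenedIndicator_zero hδ K hxδ, indicator_of_notMem (mt (@hsU x) hxU)]
      simp
    have ht0 : (0 : ℝ) ≤ thickenedIndicator hδ K x := NNReal.coe_nonneg _
    have ht1 : (thickenedIndicator hδ K x : ℝ) ≤ 1 := thickenedIndicator_le_one hδ K x
    rw [indicator_of_mem (show x ∈ U \ K from ⟨hxU, hxK⟩)]
    by_cases hxs : x ∈ s
    · rw [indicator_of_mem hxs, show g x - c = ((thickenedIndicator hδ K x : ℝ) - 1) • c by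
          simp [g, sub_smul], norm_smul, Real.norm_eq_abs, abs_of_nonpos (by linarith)]
      exact mul_le_of_le_one_left (norm_nonneg c) (by linarith)
    · rw [indicator_of_notMem hxs, sub_zero, norm_smul, Real.norm_eq_abs, abs_of_nonneg ht0]
      exact mul_le_of_le_one_left (norm_nonneg c) ht1
  have hUK : μ (U \ K) ≤ η :=
    calc μ (U \ K) ≤ μ (U \ s) + μ (s \ K) :=
          (measure_mono (sdiff_triangle U s K)).trans (measure_union_le _ _)
      _ ≤ η / 2 + η / 2 := add_le_add hμUs.le hμK.le
      _ = η := ENNReal.add_halves _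
  refine ⟨g, (eLpNorm_mono hg_sub).trans (hηε _ hUK), ⟨_, hg_lip⟩, ?_⟩
  have hind : MemLp (s.indicator fun _ => c) p μ := memLp_indicator_const p hs c (.inr hμs.ne)
  have hdiff : MemLp (g - s.indicator fun _ => c) p μ :=
    (memLp_indicator_const p (hU.measurableSet.diff hK.measurableSet) c
      (.inr (measure_ne_top_of_subset sdiff_subset hμU.ne))).mono
      (hg_meas.sub hind.1) (.of_forall hg_sub)
  simpa using hdiff.add hind

theorem MemLp.exists_lipschitzWith_eLpNorm_sub_le (hp : p ≠ ∞) {f : X → E} (hf : MemLp f p μ)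
    {ε : ℝ≥0∞} (hε : ε ≠ 0) :
    ∃ g : X → E, eLpNorm (f - g) p μ ≤ ε ∧ (∃ L, LipschitzWith L g) ∧ MemLp g p μ := by
  refine hf.induction_dense hp (fun g => (∃ L, LipschitzWith L g) ∧ MemLp g p μ)
    (fun c _ hs hμs _ hε => exists_lipschitzWith_eLpNorm_sub_indicator_le hp c hs hμs hε)
    ?_ (fun _ h => h.2.aestronglyMeasurable) hε
  rintro g₁ g₂ ⟨⟨L₁, h₁⟩, hg₁⟩ ⟨⟨L₂, h₂⟩, hg₂⟩
  exact ⟨⟨L₁ + L₂, h₁.add h₂⟩, hg₁.add hg₂⟩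

theorem Lp.dense_setOf_lipschitzWith [Fact (1 ≤ p)] (hp : p ≠ ∞) :
    Dense {φ : Lp E p μ | ∃ (L : ℝ≥0) (u : X → E), LipschitzWith L u ∧ ⇑φ =ᵐ[μ] u} := by
  refine Metric.dense_iff.2 fun f r hr => ?_
  obtain ⟨u, hfu, ⟨L, hu⟩, hu_mem⟩ := (Lp.memLp f).exists_lipschitzWith_eLpNorm_sub_le hp
    (ENNReal.ofReal_pos.2 (half_pos hr)).ne'
  refine ⟨hu_mem.toLp u, ?_, L, u, hu, hu_mem.coeFn_toLp⟩
  rw [mem_ball, dist_comm, ← edist_lt_ofReal]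
  calc edist f (hu_mem.toLp u) = eLpNorm (⇑f - u) p μ := by
        rw [← Lp.edist_toLp_toLp _ _ (Lp.memLp f) hu_mem, Lp.toLp_coeFn]
    _ ≤ ENNReal.ofReal (r / 2) := hfu
    _ < ENNReal.ofReal r := (ENNReal.ofReal_lt_ofReal_iff hr).2 (half_lt_self hr)

end LipschitzDense

theorem L2.real_inner_eq_integral_s6 {X : Type*} [MeasurableSpace X] {μ : Measure X}
    (f h : Lp ℝ 2 μ) : ⟪f, h⟫ = ∫ x, f x * h x ∂μ := by
  simp only [L2.inner_def, Real.inner_apply]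

theorem L2.inner_compMeasurePreserving_eq_integral {X Y : Type*} [MeasurableSpace X]
    [MeasurableSpace Y] {μ : Measure X} {ν : Measure Y} {T : X → Y}
    (hT : MeasurePreserving T μ ν) (f : Lp ℝ 2 ν) (h : Lp ℝ 2 μ) :
    ⟪Lp.compMeasurePreserving T hT f, h⟫ = ∫ x, f (T x) * h x ∂μ := by
  rw [L2.real_inner_eq_integral_s6]
  refine integral_congr_ae ?_
  filter_upwards [Lp.coeFn_compMeasurePreserving f hT] with x hx
  rw [hx, comp_apply]

end MeasureTheory

theorem Convex.setOf_exists_coeFn_ae_eq {X E : Type*} [MeasurableSpace X] {μ : Measure X}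
    [NormedAddCommGroup E] [NormedSpace ℝ E] {p : ℝ≥0∞} {S : Set (X → E)} (hS : Convex ℝ S) :
    Convex ℝ {v : Lp E p μ | ∃ u ∈ S, ⇑v =ᵐ[μ] u} := by
  rintro v₁ ⟨u₁, hu₁, h₁⟩ v₂ ⟨u₂, hu₂, h₂⟩ a b ha hb hab
  refine ⟨a • u₁ + b • u₂, hS hu₁ hu₂ ha hb hab, ?_⟩
  filter_upwards [Lp.coeFn_add (a • v₁) (b • v₂), Lp.coeFn_smul a v₁, Lp.coeFn_smul b v₂, h₁, h₂]
    with x hx hx₁ hx₂ hx₁' hx₂'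
  rw [hx, Pi.add_apply, hx₁, hx₂]
  simp [hx₁', hx₂']

section Hilbert

variable {H : Type*} [NormedAddCommGroup H] [InnerProductSpace ℝ H]

theorem Convex.mem_of_tendsto_inner [CompleteSpace H] {C : Set H} (hC : Convex ℝ C)
    (hC' : IsClosed C) {ι : Type*} {l : Filter ι} [l.NeBot] {b : ι → H} {g : H}
    (hbC : ∀ᶠ j in l, b j ∈ C) (hbg : ∀ h, Tendsto (fun j => ⟪b j, h⟫) l (𝓝 ⟪g, h⟫)) :
    g ∈ C := by
  by_contra hgC
  obtain ⟨φ, u, hφC, hφg⟩ := geometric_hahn_banach_closed_point hC hC' hgC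
  have hφ : ∀ x, ⟪x, (InnerProductSpace.toDual ℝ H).symm φ⟫ = φ x := fun x => by
    rw [real_inner_comm, InnerProductSpace.toDual_symm_apply]
  have : φ g ≤ u := by
    refine le_of_tendsto ?_ (hbC.mono fun j hj => (hφC _ hj).le)
    simpa only [hφ] using hbg ((InnerProductSpace.toDual ℝ H).symm φ)
  linarith

theorem Convex.dist_sq_le_of_mem {C : Set H} (hC : Convex ℝ C) {x y : H} (hx : x ∈ C)
    (hy : y ∈ C) (g : H) :
    dist x y ^ 2 ≤ 2 * dist g x ^ 2 + 2 * dist g y ^ 2 - 4 * infDist g C ^ 2 := by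
  have hm : infDist g C ≤ ‖g - midpoint ℝ x y‖ := by
    rw [← dist_eq_norm]
    exact infDist_le_dist_of_mem (hC.midpoint_mem hx hy)
  have hpar := parallelogram_law_with_norm ℝ (g - x) (g - y)
  rw [show g - x + (g - y) = (2 : ℝ) • (g - midpoint ℝ x y) by
      rw [midpoint_eq_smul_add, invOf_eq_inv]; module,
    show g - x - (g - y) = y - x by abel, norm_smul, Real.norm_two] at hpar
  simp only [dist_eq_norm, norm_sub_rev x y] at *
  nlinarith [infDist_nonneg (x := g) (s := C)]

theorem cauchySeq_of_dist_sq_lt_infDist_sq_add {E : ℕ → Set H}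
    (hE : ∀ N, Convex ℝ (E N)) (hE' : Antitone E) (hne : ∀ N, (E N).Nonempty) {g : H} {r : ℝ}
    (hgE : ∀ N, infDist g (E N) ≤ r) {q : ℕ → H} (hqE : ∀ N, q N ∈ E N)
    (hgq : ∀ N : ℕ, dist g (q N) ^ 2 < infDist g (E N) ^ 2 + 1 / (N + 1)) :
    CauchySeq q := by
  set a : ℕ → ℝ := fun N => infDist g (E N) ^ 2
  have ha : Monotone a := fun N M h =>
    pow_le_pow_left₀ infDist_nonneg (infDist_le_infDist_of_subset (hE' h) (hne M)) 2
  have ha_bdd : BddAbove (range a) :=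
    ⟨r ^ 2, forall_mem_range.2 fun N => pow_le_pow_left₀ infDist_nonneg (hgE N) 2⟩
  set A := ⨆ N, a N
  have hq_dist : ∀ n m, n ≤ m → dist (q n) (q m) ≤ √(4 / (n + 1) + 2 * (A - a n)) := by
    intro n m hnm
    refine Real.le_sqrt_of_sq_le ?_
    have hmn : (1 : ℝ) / (m + 1) ≤ 1 / (n + 1) := Nat.one_div_le_one_div hnm
    have hA : a m ≤ A := le_ciSup ha_bdd m
    have h4 : 4 / ((n : ℝ) + 1) = 4 * (1 / (n + 1)) := by ring
    have : dist (q n) (q m) ^ 2 ≤ 2 * dist g (q n) ^ 2 + 2 * dist g (q m) ^ 2 - 4 * a n :=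
      (hE n).dist_sq_le_of_mem (hqE n) (hE' hnm (hqE m)) g
    linarith [hgq n, hgq m]
  refine cauchySeq_of_le_tendsto_0' _ hq_dist ?_
  have h := (tendsto_one_div_add_atTop_nhds_zero_nat.const_mul 4).add
    (((tendsto_atTop_ciSup ha ha_bdd).const_sub A).const_mul 2)
  rw [sub_self, mul_zero, mul_zero, add_zero] at h
  simpa [div_eq_mul_inv] using h.sqrt

theorem exists_forall_mem_closure_dist_le_of_antitone [CompleteSpace H] {E : ℕ → Set H}
    (hE : ∀ N, Convex ℝ (E N)) (hE' : Antitone E) (hne : ∀ N, (E N).Nonempty) {g : H} {r : ℝ}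
    (hgE : ∀ N, infDist g (E N) ≤ r) :
    ∃ ψ, (∀ N, ψ ∈ closure (E N)) ∧ dist ψ g ≤ r := by
  have hq : ∀ N : ℕ, ∃ q ∈ E N, dist g q ^ 2 < infDist g (E N) ^ 2 + 1 / (N + 1) := fun N => by
    obtain ⟨q, hq, hgq⟩ := (infDist_lt_iff (hne N)).1 <|
      (Real.lt_sqrt infDist_nonneg).2 (lt_add_of_pos_right _ Nat.one_div_pos_of_nat)
    exact ⟨q, hq, (Real.lt_sqrt dist_nonneg).1 hgq⟩
  choose q hqE hgq using hq
  obtain ⟨ψ, hψ⟩ := cauchySeq_tendsto_of_complete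
    (cauchySeq_of_dist_sq_lt_infDist_sq_add hE hE' hne hgE hqE hgq)
  refine ⟨ψ, fun N => mem_closure_of_tendsto hψ ((eventually_ge_atTop N).mono
    fun M hM => hE' hM (hqE M)), ?_⟩
  have hgψ : dist g ψ ^ 2 ≤ r ^ 2 + 0 :=
    le_of_tendsto_of_tendsto' ((tendsto_const_nhds.dist hψ).pow 2)
      (tendsto_one_div_add_atTop_nhds_zero_nat.const_add (r ^ 2)) fun N => by
        nlinarith [hgq N, hgE N, infDist_nonneg (x := g) (s := E N)]
  rw [add_zero] at hgψ
  rw [dist_comm]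
  exact (pow_le_pow_iff_left₀ dist_nonneg (infDist_nonneg.trans (hgE 0)) two_ne_zero).1 hgψ

end Hilbert

section WsInvariant

variable {X Y : Type*} [PseudoMetricSpace X] [MeasurableSpace X]

def IsWsInvariant (μ : Measure X) (F : X → X) (u : X → Y) : Prop :=
  ∃ Ω : Set X, μ Ωᶜ = 0 ∧ ∀ x ∈ Ω, ∀ y ∈ Ω,
    Tendsto (fun k : ℕ => dist (F^[k] x) (F^[k] y)) atTop (𝓝 0) → u x = u y

variable {μ : Measure X} {F : X → X}

theorem isWsInvariant_of_tendstoInMeasure_of_tendsto_dist [MetricSpace Y] {u : ℕ → X → Y}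
    {v : X → Y} (huv : TendstoInMeasure μ u atTop v) {Ω : Set X} (hΩ : μ Ωᶜ = 0)
    (hu : ∀ x ∈ Ω, ∀ y ∈ Ω, Tendsto (fun k : ℕ => dist (F^[k] x) (F^[k] y)) atTop (𝓝 0) →
      Tendsto (fun i => dist (u i x) (u i y)) atTop (𝓝 0)) :
    IsWsInvariant μ F v := by
  obtain ⟨ns, hns, hae⟩ := huv.exists_seq_tendsto_ae
  refine ⟨Ω ∩ {x | Tendsto (fun i => u (ns i) x) atTop (𝓝 (v x))}, ?_, ?_⟩
  · rw [compl_inter]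
    exact measure_union_null hΩ (ae_iff.1 hae)
  rintro x ⟨hxΩ, hx⟩ y ⟨hyΩ, hy⟩ hxy
  exact dist_eq_zero.1 <|
    tendsto_nhds_unique (hx.dist hy) ((hu x hxΩ y hyΩ hxy).comp hns.tendsto_atTop)

theorem IsWsInvariant.of_tendstoInMeasure [MetricSpace Y] {u : ℕ → X → Y} {v : X → Y}
    (hu : ∀ i, IsWsInvariant μ F (u i)) (huv : TendstoInMeasure μ u atTop v) :
    IsWsInvariant μ F v := by
  choose Ω hΩ hu using hu
  refine isWsInvariant_of_tendstoInMeasure_of_tendsto_dist huv (Ω := ⋂ i, Ω i) ?_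
    fun x hx y hy hxy => ?_
  · rw [compl_iInter]
    exact measure_iUnion_null hΩ
  · simp only [mem_iInter] at hx hy
    simp only [hu _ x (hx _) y (hy _) hxy, dist_self, tendsto_const_nhds]

end WsInvariant

section TailLipschitz

variable {X Y : Type*} [PseudoMetricSpace X]

/-- Lipschitz continuity with respect to `sup_{m ≥ N} dist (F^[m] x) (F^[m] y)`, stated without
the supremum, which may be infinite. -/
def TailLipschitzWith [PseudoMetricSpace Y] (F : X → X) (L : ℝ≥0) (N : ℕ) (u : X → Y) : Prop :=
  ∀ x y (e : ℝ), (∀ m, N ≤ m → dist (F^[m] x) (F^[m] y) ≤ e) → dist (u x) (u y) ≤ L * e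

variable {F : X → X}

theorem TailLipschitzWith.mono [PseudoMetricSpace Y] {L : ℝ≥0} {N M : ℕ} {u : X → Y}
    (hu : TailLipschitzWith F L M u) (hNM : N ≤ M) : TailLipschitzWith F L N u :=
  fun x y e hxy => hu x y e fun m hm => hxy m (hNM.trans hm)

theorem LipschitzWith.tailLipschitzWith_comp_iterate [PseudoMetricSpace Y] {L : ℝ≥0}
    {φ : X → Y} (hφ : LipschitzWith L φ) {N m : ℕ} (hNm : N ≤ m) :
    TailLipschitzWith F L N (φ ∘ F^[m]) :=
  fun _ _ _ hxy => (hφ.dist_le_mul _ _).trans (mul_le_mul_of_nonneg_left (hxy m hNm) L.2)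

theorem convex_setOf_tailLipschitzWith {E : Type*} [SeminormedAddCommGroup E] [NormedSpace ℝ E]
    (L : ℝ≥0) (N : ℕ) : Convex ℝ {u : X → E | TailLipschitzWith F L N u} := by
  intro u₁ hu₁ u₂ hu₂ a b ha hb hab x y e hxy
  calc dist ((a • u₁ + b • u₂) x) ((a • u₁ + b • u₂) y)
      ≤ a * dist (u₁ x) (u₁ y) + b * dist (u₂ x) (u₂ y) := by
        simp only [Pi.add_apply, Pi.smul_apply, dist_eq_norm]
        rw [add_sub_add_comm, ← smul_sub, ← smul_sub]
        refine (norm_add_le _ _).trans ?_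
        rw [norm_smul_of_nonneg ha, norm_smul_of_nonneg hb]
    _ ≤ a * (L * e) + b * (L * e) := by
        gcongr <;> [exact hu₁ x y e hxy; exact hu₂ x y e hxy]
    _ = L * e := by rw [← add_mul, hab, one_mul]

theorem tendsto_dist_of_tailLipschitzWith [PseudoMetricSpace Y] {L : ℝ≥0} {u : ℕ → X → Y}
    (hu : ∀ N, TailLipschitzWith F L N (u N)) {x y : X}
    (hxy : Tendsto (fun k : ℕ => dist (F^[k] x) (F^[k] y)) atTop (𝓝 0)) :
    Tendsto (fun N => dist (u N x) (u N y)) atTop (𝓝 0) := by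
  refine tendsto_order.2 ⟨fun a ha => .of_forall fun N => ha.trans_le dist_nonneg, fun ε hε => ?_⟩
  have he : 0 < ε / (L + 1) := by positivity
  obtain ⟨N₀, hN₀⟩ := (hxy.eventually (eventually_le_nhds he)).exists_forall_of_atTop
  refine eventually_atTop.2 ⟨N₀, fun N hN =>
    (hu N x y _ fun m hm => hN₀ m (hN.trans hm)).trans_lt ?_⟩
  rw [mul_div_assoc', div_lt_iff₀ (by positivity)]
  nlinarith

end TailLipschitz

theorem isWsInvariant_of_forall_mem_closure {X E : Type*} [PseudoMetricSpace X]
    [MeasurableSpace X] {μ : Measure X} {F : X → X} [NormedAddCommGroup E] {p : ℝ≥0∞}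
    [Fact (1 ≤ p)] {L : ℝ≥0} {ψ : Lp E p μ}
    (hψ : ∀ N, ψ ∈ closure {v : Lp E p μ | ∃ u ∈ {u | TailLipschitzWith F L N u}, ⇑v =ᵐ[μ] u}) :
    IsWsInvariant μ F ψ := by
  have hv : ∀ N : ℕ, ∃ v : Lp E p μ, ∃ u, TailLipschitzWith F L N u ∧ ⇑v =ᵐ[μ] u ∧
      dist v ψ < 1 / (N + 1) := fun N => by
    obtain ⟨v, ⟨u, hu, hvu⟩, hvψ⟩ := Metric.mem_closure_iff.1 (hψ N) _ Nat.one_div_pos_of_nat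
    exact ⟨v, u, hu, hvu, by rwa [dist_comm]⟩
  choose v u hu hvu hvψ using hv
  have hv_tendsto : Tendsto v atTop (𝓝 ψ) := tendsto_iff_dist_tendsto_zero.2 <| squeeze_zero
    (fun _ => dist_nonneg) (fun N => (hvψ N).le) tendsto_one_div_add_atTop_nhds_zero_nat
  exact isWsInvariant_of_tendstoInMeasure_of_tendsto_dist
    ((tendstoInMeasure_of_tendsto_Lp hv_tendsto).congr_left hvu) (Ω := univ) (by simp)
    fun x _ y _ hxy => tendsto_dist_of_tailLipschitzWith hu hxy

theorem exists_isWsInvariant_dist_le {X : Type*} [PseudoMetricSpace X] [MeasurableSpace X]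
    {μ : Measure X} {F : X → X} (hF : MeasurePreserving F μ μ) {n : ℕ → ℕ} (hn : StrictMono n)
    {f g : Lp ℝ 2 μ} (hfg : ∀ h, Tendsto (fun i =>
      ⟪Lp.compMeasurePreserving (F^[n i]) (hF.iterate (n i)) f, h⟫) atTop (𝓝 ⟪g, h⟫))
    {φ : Lp ℝ 2 μ} {L : ℝ≥0} {u : X → ℝ} (hu : LipschitzWith L u) (hφu : ⇑φ =ᵐ[μ] u) :
    ∃ ψ : Lp ℝ 2 μ, IsWsInvariant μ F ψ ∧ dist ψ g ≤ dist f φ := by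
  set S : ℕ → Set (Lp ℝ 2 μ) := fun N =>
    {v | ∃ u ∈ {u | TailLipschitzWith F L N u}, ⇑v =ᵐ[μ] u}
  have hS : ∀ N, Convex ℝ (S N) := fun N =>
    (convex_setOf_tailLipschitzWith L N).setOf_exists_coeFn_ae_eq
  have hS_anti : Antitone S := fun N M hNM v ⟨u, hu, hvu⟩ =>
    ⟨u, TailLipschitzWith.mono hu hNM, hvu⟩
  have hφS : ∀ N j, N ≤ j → Lp.compMeasurePreserving (F^[n j]) (hF.iterate (n j)) φ ∈ S N :=
    fun N j hNj => ⟨u ∘ F^[n j], hu.tailLipschitzWith_comp_iterate (hNj.trans hn.le_apply),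
      (Lp.coeFn_compMeasurePreserving _ _).trans
        ((hF.iterate (n j)).quasiMeasurePreserving.ae_eq_comp hφu)⟩
  have hg : ∀ N, g ∈ cthickening (dist f φ) (S N) := fun N =>
    ((hS N).cthickening _).mem_of_tendsto_inner isClosed_cthickening
      ((eventually_ge_atTop N).mono fun j hj => mem_cthickening_of_dist_le _ _ _ _ (hφS N j hj)
        ((Lp.isometry_compMeasurePreserving _).dist_eq f φ).le) hfg
  obtain ⟨ψ, hψS, hψg⟩ := exists_forall_mem_closure_dist_le_of_antitone hS hS_anti
    (fun N => ⟨_, hφS N N le_rfl⟩)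
    fun N => ENNReal.toReal_le_of_le_ofReal dist_nonneg (mem_cthickening_iff.1 (hg N))
  exact ⟨ψ, isWsInvariant_of_forall_mem_closure hψS, hψg⟩

theorem weak_limit_Ws_invariant_general {X : Type*} [MetricSpace X]
    [MeasurableSpace X] [BorelSpace X]
    (μ : Measure X) [μ.Regular]
    (F : X → X) (hmp : MeasurePreserving F μ μ)
    (f : Lp ℝ 2 μ)
    (g : Lp ℝ 2 μ) (n : ℕ → ℕ) (hn : StrictMono n)
    (hweak : ∀ h : Lp ℝ 2 μ,
      Tendsto (fun i : ℕ => ∫ x, (f : X → ℝ) (F^[n i] x) * (h : X → ℝ) x ∂μ) atTop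
        (𝓝 (∫ x, (g : X → ℝ) x * (h : X → ℝ) x ∂μ))) :
    ∃ g₀ : X → ℝ, (g : X → ℝ) =ᵐ[μ] g₀ ∧
      ∃ Ω : Set X, μ Ωᶜ = 0 ∧
        ∀ x ∈ Ω, ∀ y ∈ Ω,
          Tendsto (fun k : ℕ => dist (F^[k] x) (F^[k] y)) atTop (𝓝 0) →
          g₀ x = g₀ y := by
  have hfg : ∀ h, Tendsto (fun i =>
      ⟪Lp.compMeasurePreserving (F^[n i]) (hmp.iterate (n i)) f, h⟫) atTop (𝓝 ⟪g, h⟫) := by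
    intro h
    simp only [L2.inner_compMeasurePreserving_eq_integral]
    rw [L2.real_inner_eq_integral_s6]
    exact hweak h
  have hψ : ∀ k : ℕ, ∃ ψ : Lp ℝ 2 μ, IsWsInvariant μ F ψ ∧ dist ψ g < 1 / (k + 1) := by
    intro k
    obtain ⟨φ, ⟨L, u, hu, hφu⟩, hfφ⟩ :=
      (Lp.dense_setOf_lipschitzWith (E := ℝ) (p := 2) ENNReal.ofNat_ne_top).exists_dist_lt
        f Nat.one_div_pos_of_nat
    obtain ⟨ψ, hψ, hψg⟩ := exists_isWsInvariant_dist_le hmp hn hfg hu hφu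
    exact ⟨ψ, hψ, hψg.trans_lt hfφ⟩
  choose ψ hψ hψg using hψ
  have hψ_tendsto : Tendsto ψ atTop (𝓝 g) := tendsto_iff_dist_tendsto_zero.2 <| squeeze_zero
    (fun _ => dist_nonneg) (fun k => (hψg k).le) tendsto_one_div_add_atTop_nhds_zero_nat
  exact ⟨g, .rfl, IsWsInvariant.of_tendstoInMeasure hψ (tendstoInMeasure_of_tendsto_Lp hψ_tendsto)⟩

/-- Let `X` be a metric space, `μ` a regular σ-finite Borel measure, `F` a
`μ`-preserving transformation and `f ∈ L²(μ)`. Then any weak limit `g` in `L²(μ)`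
of a subsequence `f ∘ F^{nᵢ}` is `Wˢ`-invariant. -/
theorem weak_limit_Ws_invariant {X : Type*} [MetricSpace X]
    [MeasurableSpace X] [BorelSpace X]
    (μ : Measure X) [SigmaFinite μ] [μ.Regular]
    (F : X → X) (hFmeas : Measurable F) (hmp : MeasurePreserving F μ μ)
    (f : Lp ℝ 2 μ)
    (g : Lp ℝ 2 μ) (n : ℕ → ℕ) (hn : StrictMono n)
    (hweak : ∀ h : Lp ℝ 2 μ,
      Tendsto (fun i : ℕ => ∫ x, (f : X → ℝ) (F^[n i] x) * (h : X → ℝ) x ∂μ) atTop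
        (𝓝 (∫ x, (g : X → ℝ) x * (h : X → ℝ) x ∂μ))) :
    ∃ g₀ : X → ℝ, (g : X → ℝ) =ᵐ[μ] g₀ ∧
      ∃ Ω : Set X, μ Ωᶜ = 0 ∧
        ∀ x ∈ Ω, ∀ y ∈ Ω,
          Tendsto (fun k : ℕ => dist (F^[k] x) (F^[k] y)) atTop (𝓝 0) →
          g₀ x = g₀ y :=
  weak_limit_Ws_invariant_general μ F hmp f g n hn hweak
end

section
/- Let (u_n) be a sequence of positive reals with 1/u_n ≥ exp(2/(6n + 2 ln n + C) − 4/(6n + 2 ln n + C)² + ε_n) where Σ|ε_n| < ∞. Then there exists a constant C' > 0 such that ∏_{i=1}^{n−1} u_i^{-1} ≥ C' n^{1/3} for all n ≥ 2. -/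
/-!
Split the exponent as `aₙ = (log (n + 1) - log n) / 3 + rₙ`. The first part telescopes to
`(log n) / 3`. Since `2 / (6n + δ) ≥ 1 / (3n) - |δ| / (3n²)` once `6n + δ ≥ n`, and
`δ = 2 log n + C = o(n^{1/2})`, the remainder satisfies `rₙ ≥ -n^{-3/2} - |εₙ|` for large `n`,
so every partial sum of `r` is at least some constant `K`. Hence `∏ uᵢ⁻¹ ≥ exp (∑ aᵢ) ≥ e^K n^{1/3}`.
-/

open Real Finset Filter Asymptotics

lemma exists_forall_le_sum_of_eventually_neg_le {ι : Type*} {r b : ι → ℝ} (hb : Summable b)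
    (hrb : ∀ᶠ i in cofinite, -b i ≤ r i) : ∃ K, ∀ s : Finset ι, K ≤ ∑ i ∈ s, r i := by
  have hneg : Summable fun i => max (-r i) 0 := by
    refine hb.abs.of_norm_bounded_eventually ?_
    filter_upwards [hrb] with i hi
    rw [Real.norm_of_nonneg (le_max_right _ _)]
    exact max_le (by linarith [le_abs_self (b i)]) (abs_nonneg _)
  refine ⟨-∑' i, max (-r i) 0, fun s => ?_⟩
  calc -∑' i, max (-r i) 0 ≤ -∑ i ∈ s, max (-r i) 0 :=
        neg_le_neg (hneg.sum_le_tsum s fun i _ => le_max_right _ _)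
    _ ≤ ∑ i ∈ s, r i := by
        rw [← sum_neg_distrib]
        exact sum_le_sum fun i _ => neg_le.mpr (le_max_left _ _)

lemma sum_Icc_log_succ_sub_log (n : ℕ) :
    ∑ i ∈ Icc 1 (n - 1), (log ((i : ℝ) + 1) - log i) = log n := by
  rcases n with _ | n
  · simp
  · rw [Nat.add_sub_cancel, ← Ico_add_one_right_eq_Icc]
    simpa using sum_Ico_sub (fun i : ℕ => log (i : ℝ)) (Nat.succ_le_succ n.zero_le)

lemma neg_div_sq_le_two_div_sub_four_div_sq_sub_log_succ_sub_log {x D : ℝ} (hx : 0 < x)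
    (hxD : x ≤ D) :
    -((|D - 6 * x| / 3 + 4) / x ^ 2) ≤ 2 / D - 4 / D ^ 2 - (log (x + 1) - log x) / 3 := by
  have hD : 0 < D := hx.trans_le hxD
  have hlog : log (x + 1) - log x ≤ 1 / x := by
    rw [← log_div (by positivity) hx.ne']
    calc log ((x + 1) / x) ≤ (x + 1) / x - 1 := log_le_sub_one_of_pos (by positivity)
      _ = 1 / x := by field_simp; ring
  have hmain : -(|D - 6 * x| / (3 * x ^ 2)) ≤ 2 / D - 1 / (3 * x) := by
    have hdiff : 2 / D - 1 / (3 * x) = -((D - 6 * x) / (3 * x * D)) := by field_simp; ring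
    rw [hdiff, neg_le_neg_iff]
    calc (D - 6 * x) / (3 * x * D) ≤ |D - 6 * x| / (3 * x * D) := by gcongr; exact le_abs_self _
      _ ≤ |D - 6 * x| / (3 * x ^ 2) := by rw [sq, ← mul_assoc]; gcongr
  have hsq : 4 / D ^ 2 ≤ 4 / x ^ 2 := by gcongr
  have hsplit : -((|D - 6 * x| / 3 + 4) / x ^ 2) = -(|D - 6 * x| / (3 * x ^ 2)) - 4 / x ^ 2 := by
    ring
  have hthird : 1 / (3 * x) = 1 / x / 3 := by ring
  linarith

lemma isLittleO_abs_two_mul_log_add_const_rpow_half (C : ℝ) :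
    (fun x => |2 * log x + C| / 3 + 4) =o[atTop] fun x : ℝ => x ^ (1 / 2 : ℝ) := by
  have hconst (c : ℝ) : (fun _ : ℝ => c) =o[atTop] fun x : ℝ => x ^ (1 / 2 : ℝ) :=
    isLittleO_const_left.mpr <| .inr <|
      tendsto_norm_atTop_atTop.comp (tendsto_rpow_atTop (by norm_num))
  have hlog := ((isLittleO_log_rpow_atTop (by norm_num)).const_mul_left 2).add (hconst C)
  exact (((isLittleO_abs_left.mpr hlog).const_mul_left 3⁻¹).add (hconst 4)).congr_left
    fun x => by ring

lemma eventually_neg_rpow_le_two_div_sub_four_div_sq_sub_log_succ_sub_log (C : ℝ) :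
    ∀ᶠ x : ℝ in atTop, -x ^ (-(3 / 2) : ℝ) ≤
      2 / (6 * x + 2 * log x + C) - 4 / (6 * x + 2 * log x + C) ^ 2
        - (log (x + 1) - log x) / 3 := by
  filter_upwards [(isLittleO_abs_two_mul_log_add_const_rpow_half C).bound one_pos,
    eventually_ge_atTop 1, eventually_ge_atTop |C|] with x hsmall hx hC
  have hx0 : 0 < x := one_pos.trans_le hx
  have hxD : x ≤ 6 * x + 2 * log x + C := by linarith [log_nonneg hx, neg_abs_le C]
  have key := neg_div_sq_le_two_div_sub_four_div_sq_sub_log_succ_sub_log hx0 hxD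
  rw [show 6 * x + 2 * log x + C - 6 * x = 2 * log x + C by ring] at key
  rw [norm_of_nonneg (by positivity), norm_of_nonneg (by positivity), one_mul] at hsmall
  have hrpow : x ^ (-(3 / 2) : ℝ) = x ^ (1 / 2 : ℝ) / x ^ 2 := by
    rw [← rpow_natCast, ← rpow_sub hx0]
    norm_num
  rw [hrpow]
  exact le_trans (neg_le_neg (by gcongr)) key

theorem product_lower_bound_general (u ε : ℕ → ℝ) (C : ℝ)
    (hε : Summable fun n => |ε n|)
    (hrec : ∀ n : ℕ, 1 ≤ n →
      Real.exp (2 / (6 * (n : ℝ) + 2 * Real.log n + C)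
        - 4 / (6 * (n : ℝ) + 2 * Real.log n + C) ^ 2 + ε n) ≤ 1 / u n) :
    ∃ C' : ℝ, 0 < C' ∧ ∀ n : ℕ, 2 ≤ n →
      C' * (n : ℝ) ^ ((1 : ℝ) / 3) ≤ ∏ i ∈ Finset.Icc 1 (n - 1), (u i)⁻¹ := by
  set a : ℕ → ℝ := fun n => 2 / (6 * (n : ℝ) + 2 * log n + C)
    - 4 / (6 * (n : ℝ) + 2 * log n + C) ^ 2 + ε n
  obtain ⟨K, hK⟩ := exists_forall_le_sum_of_eventually_neg_le
    (r := fun i => a i - (log ((i : ℝ) + 1) - log i) / 3)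
    ((summable_nat_rpow.mpr (by norm_num : -(3 / 2) < (-1 : ℝ))).add hε) <| by
      rw [Nat.cofinite_eq_atTop]
      filter_upwards [tendsto_natCast_atTop_atTop.eventually
        (eventually_neg_rpow_le_two_div_sub_four_div_sq_sub_log_succ_sub_log C)] with i hi
      linarith [neg_abs_le (ε i)]
  refine ⟨exp K, exp_pos K, fun n hn => ?_⟩
  have hsum : log n / 3 + K ≤ ∑ i ∈ Icc 1 (n - 1), a i := by
    have := hK (Icc 1 (n - 1))
    rw [sum_sub_distrib, ← sum_div, sum_Icc_log_succ_sub_log] at this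
    linarith
  calc exp K * (n : ℝ) ^ ((1 : ℝ) / 3) = exp (log n / 3 + K) := by
        rw [exp_add, rpow_def_of_pos (by positivity), mul_comm, mul_one_div]
    _ ≤ exp (∑ i ∈ Icc 1 (n - 1), a i) := exp_le_exp.mpr hsum
    _ = ∏ i ∈ Icc 1 (n - 1), exp (a i) := exp_sum _ _
    _ ≤ ∏ i ∈ Icc 1 (n - 1), (u i)⁻¹ := prod_le_prod (fun _ _ => (exp_pos _).le)
        fun i hi => (hrec i (mem_Icc.mp hi).1).trans_eq (one_div _)

/-- Multiplicative lower estimate: if `1/uₙ ≥ exp(2/(6n + 2 ln n + C) −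
4/(6n + 2 ln n + C)² + εₙ)` with `∑ |εₙ| < ∞`, then `∏_{i=1}^{n−1} uᵢ⁻¹ ≥ C' n^{1/3}`. -/
theorem product_lower_bound (u ε : ℕ → ℝ) (C : ℝ)
    (hu : ∀ n : ℕ, 1 ≤ n → 0 < u n)
    (hden : ∀ n : ℕ, 1 ≤ n → 0 < 6 * (n : ℝ) + 2 * Real.log n + C)
    (hε : Summable fun n => |ε n|)
    (hrec : ∀ n : ℕ, 1 ≤ n →
      Real.exp (2 / (6 * (n : ℝ) + 2 * Real.log n + C)
        - 4 / (6 * (n : ℝ) + 2 * Real.log n + C) ^ 2 + ε n) ≤ 1 / u n) :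
    ∃ C' : ℝ, 0 < C' ∧ ∀ n : ℕ, 2 ≤ n →
      C' * (n : ℝ) ^ ((1 : ℝ) / 3) ≤ ∏ i ∈ Finset.Icc 1 (n - 1), (u i)⁻¹ :=
  product_lower_bound_general u ε C hε hrec
end

section
/- Let (u_n) be positive reals with 1/u_n² ≤ 1 + 4/(6n − 2 ln n + C) + 4/(6n − 2 ln n + C)² + ε_n, Σ|ε_n| < ∞. Then there exists C' > 0 such that ∏_{i=1}^{n−1} u_i^{-2} ≤ C' n^{2/3} for all n ≥ 2. -/
open Real Finset Filter Asymptotics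

/-! By `1 + x ≤ exp x` the product is at most `exp (∑ eᵢ)`, where `eᵢ = 4/dᵢ + 4/dᵢ² + εᵢ` and
`dᵢ = 6i - 2 log i + C`. Since `4/dᵢ = 2/(3i) + O(log i / i²)` and
`2/(3i) = (2/3)(log (i+1) - log i) + O(1/i²)`, the partial sums of `eᵢ` exceed the telescoping
sums `(2/3) log n` by at most a constant. -/

theorem Real.summable_log_div_rpow {p : ℝ} (hp : 1 < p) :
    Summable fun n : ℕ => log n / (n : ℝ) ^ p := by
  have hr : 0 < (p - 1) / 2 := by linarith
  have hlog : (fun n : ℕ => log n) =o[atTop] fun n : ℕ => (n : ℝ) ^ ((p - 1) / 2) :=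
    (isLittleO_log_rpow_atTop hr).comp_tendsto tendsto_natCast_atTop_atTop
  have hpow : (fun n : ℕ => (n : ℝ) ^ ((p - 1) / 2) / (n : ℝ) ^ p)
      =ᶠ[atTop] fun n : ℕ => (n : ℝ) ^ ((p - 1) / 2 - p) := by
    filter_upwards [eventually_gt_atTop 0] with n hn
    rw [← rpow_sub (Nat.cast_pos.2 hn)]
  refine summable_of_isBigO_nat
    (summable_nat_rpow.2 (show (p - 1) / 2 - p < -1 by linarith)) ?_
  simp_rw [div_eq_mul_inv] at hpow ⊢
  exact (hlog.isBigO.mul (isBigO_refl _ _)).trans_eventuallyEq hpow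

theorem summable_log_add_div_sq (a : ℝ) : Summable fun n : ℕ => (log n + a) / (n : ℝ) ^ 2 := by
  simp_rw [add_div, div_eq_mul_inv a]
  refine .add ?_ ((summable_nat_pow_inv.2 one_lt_two).mul_left a)
  simpa [rpow_two] using summable_log_div_rpow one_lt_two

theorem prod_le_exp_sum {ι : Type*} (s : Finset ι) {x e : ι → ℝ} (hx₀ : ∀ i ∈ s, 0 ≤ x i)
    (hx : ∀ i ∈ s, x i ≤ 1 + e i) : ∏ i ∈ s, x i ≤ exp (∑ i ∈ s, e i) := by
  rw [exp_sum]
  exact prod_le_prod hx₀ fun i hi => (hx i hi).trans (by linarith [add_one_le_exp (e i)])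

theorem exists_sum_le_of_eventually_le {ι : Type*} {f g : ι → ℝ} (hg : Summable g)
    (hfg : ∀ᶠ i in cofinite, f i ≤ g i) : ∃ K, ∀ s : Finset ι, ∑ i ∈ s, f i ≤ K := by
  have hpos : Summable fun i => max (f i) 0 := by
    refine hg.abs.of_norm_bounded_eventually ?_
    filter_upwards [hfg] with i hi
    rw [norm_of_nonneg (le_max_right _ _)]
    exact max_le (hi.trans (le_abs_self _)) (abs_nonneg _)
  exact ⟨∑' i, max (f i) 0, fun s => (sum_le_sum fun i _ => le_max_left _ _).trans
    (hpos.sum_le_tsum s fun i _ => le_max_right _ _)⟩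

theorem four_div_le_of_three_mul_le {x d L : ℝ} (hx : 0 < x) (hd : 3 * x ≤ d)
    (hL : 6 * x - d ≤ L) (hL₀ : 0 ≤ L) : 4 / d ≤ 2 / (3 * x) + 2 * L / (9 * x ^ 2) := by
  have hd₀ : 0 < d := by linarith
  rw [div_add_div _ _ (by positivity) (by positivity), div_le_div_iff₀ hd₀ (by positivity)]
  nlinarith [mul_le_mul_of_nonneg_left hd hL₀, mul_pos hx hx, mul_pos (mul_pos hx hx) hx]

theorem inv_sub_sq_le_log_add_one_sub_log {x : ℝ} (hx : 0 < x) :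
    1 / x - 1 / x ^ 2 ≤ log (x + 1) - log x := by
  have h := one_sub_inv_le_log_of_pos (show 0 < (x + 1) / x by positivity)
  rw [log_div (by positivity) hx.ne', inv_div] at h
  have : 1 / x - 1 / x ^ 2 ≤ 1 - x / (x + 1) := by
    rw [show 1 - x / (x + 1) = 1 / (x + 1) by field_simp; ring]
    rw [div_sub_div _ _ hx.ne' (by positivity), div_le_div_iff₀ (by positivity) (by positivity)]
    nlinarith
  linarith

theorem four_div_add_four_div_sq_sub_log_le {x C : ℝ} (hx : 1 ≤ x) (hC : |C| ≤ x) :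
    4 / (6 * x - 2 * log x + C) + 4 / (6 * x - 2 * log x + C) ^ 2
      - 2 / 3 * (log (x + 1) - log x) ≤ (log x + (|C| + 2)) / x ^ 2 := by
  have hx₀ : 0 < x := by linarith
  have hlog : 0 ≤ log x := log_nonneg hx
  have hd : 3 * x ≤ 6 * x - 2 * log x + C := by
    linarith [log_le_sub_one_of_pos hx₀, neg_abs_le C]
  have h₁ := four_div_le_of_three_mul_le hx₀ hd (L := 2 * log x + |C|)
    (by linarith [neg_le_abs C]) (by positivity)
  have h₂ : 4 / (6 * x - 2 * log x + C) ^ 2 ≤ 4 / (9 * x ^ 2) := by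
    gcongr
    nlinarith
  have h₃ := inv_sub_sq_le_log_add_one_sub_log hx₀
  calc _ ≤ 2 / (3 * x) + 2 * (2 * log x + |C|) / (9 * x ^ 2) + 4 / (9 * x ^ 2)
        - 2 / 3 * (1 / x - 1 / x ^ 2) := by linarith
    _ = (4 * log x + 2 * |C| + 10) / (9 * x ^ 2) := by field_simp; ring
    _ ≤ (log x + (|C| + 2)) / x ^ 2 := by
      rw [div_le_div_iff₀ (by positivity) (by positivity)]
      nlinarith [abs_nonneg C, sq_nonneg x]

theorem product_upper_bound_general (u ε : ℕ → ℝ) (C : ℝ)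
    (hε : Summable fun n => |ε n|)
    (hrec : ∀ n : ℕ, 1 ≤ n →
      1 / (u n) ^ 2 ≤ 1 + 4 / (6 * (n : ℝ) - 2 * Real.log n + C)
        + 4 / (6 * (n : ℝ) - 2 * Real.log n + C) ^ 2 + ε n) :
    ∃ C' : ℝ, 0 < C' ∧ ∀ n : ℕ, 2 ≤ n →
      ∏ i ∈ Finset.Icc 1 (n - 1), ((u i)⁻¹) ^ 2 ≤ C' * (n : ℝ) ^ ((2 : ℝ) / 3) := by
  set e : ℕ → ℝ := fun i =>
    4 / (6 * (i : ℝ) - 2 * log i + C) + 4 / (6 * (i : ℝ) - 2 * log i + C) ^ 2 + ε i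
  obtain ⟨K, hK⟩ := exists_sum_le_of_eventually_le
    (f := fun i : ℕ => e i - 2 / 3 * (log ((i : ℝ) + 1) - log i))
    ((summable_log_add_div_sq (|C| + 2)).add hε) <| by
      rw [Nat.cofinite_eq_atTop]
      filter_upwards [eventually_ge_atTop 1, eventually_ge_atTop ⌈|C|⌉₊] with i hi hiC
      have := four_div_add_four_div_sq_sub_log_le (x := i) (C := C) (by exact_mod_cast hi)
        (Nat.ceil_le.1 hiC)
      linarith [le_abs_self (ε i)]
  refine ⟨exp K, exp_pos K, fun n hn => ?_⟩
  have htel : ∑ i ∈ Icc 1 (n - 1), (log ((i : ℝ) + 1) - log i) = log n := by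
    have := sum_Icc_sub (by omega : 1 ≤ n - 1) fun i : ℕ => log (i : ℝ)
    push_cast [Nat.sub_add_cancel (by omega : 1 ≤ n)] at this
    simpa using this
  calc ∏ i ∈ Icc 1 (n - 1), ((u i)⁻¹) ^ 2
      ≤ exp (∑ i ∈ Icc 1 (n - 1), e i) :=
        prod_le_exp_sum _ (fun i _ => sq_nonneg _) fun i hi => by
          simpa [e, add_assoc] using hrec i (mem_Icc.1 hi).1
    _ = exp (∑ i ∈ Icc 1 (n - 1), (e i - 2 / 3 * (log ((i : ℝ) + 1) - log i))
          + 2 / 3 * log n) := by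
        rw [sum_sub_distrib, ← mul_sum, htel, sub_add_cancel]
    _ ≤ exp (K + 2 / 3 * log n) := by gcongr; exact hK _
    _ = exp K * (n : ℝ) ^ ((2 : ℝ) / 3) := by
        rw [exp_add, rpow_def_of_pos (by positivity)]
        ring_nf

/-- Multiplicative upper estimate: if `1/uₙ² ≤ 1 + 4/(6n − 2 ln n + C) +
4/(6n − 2 ln n + C)² + εₙ` with `∑ |εₙ| < ∞`, then `∏_{i=1}^{n−1} uᵢ⁻² ≤ C' n^{2/3}`. -/
theorem product_upper_bound (u ε : ℕ → ℝ) (C : ℝ)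
    (hu : ∀ n : ℕ, 1 ≤ n → 0 < u n)
    (hden : ∀ n : ℕ, 1 ≤ n → 0 < 6 * (n : ℝ) - 2 * Real.log n + C)
    (hε : Summable fun n => |ε n|)
    (hrec : ∀ n : ℕ, 1 ≤ n →
      1 / (u n) ^ 2 ≤ 1 + 4 / (6 * (n : ℝ) - 2 * Real.log n + C)
        + 4 / (6 * (n : ℝ) - 2 * Real.log n + C) ^ 2 + ε n) :
    ∃ C' : ℝ, 0 < C' ∧ ∀ n : ℕ, 2 ≤ n →
      ∏ i ∈ Finset.Icc 1 (n - 1), ((u i)⁻¹) ^ 2 ≤ C' * (n : ℝ) ^ ((2 : ℝ) / 3) :=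
  product_upper_bound_general u ε C hε hrec
end

section
/- Let 0 < a < A and 0 < b < B be constants and (λ_m) positive reals (backward recursion) satisfying a/m² + (1 + b/m)·λ_m/(1+λ_m) ≤ λ_{m−1} ≤ A/m² + (1 + B/m)·λ_m/(1+λ_m) for all m ≥ m_0. Then there exist constants 0 < c < C such that c/m ≤ λ_m ≤ C/m for all m ≥ m_0, i.e., λ_m ≍ 1/m. -/
/-!
The recursion runs backwards, so bounds propagate from large indices down to small ones, but
nothing is known at infinity. For a fixed `m` we therefore start at index `2m`, where only
`0 ≤ λ_{2m} ≤ A + B + 1` is known, and run the recursion down to `m`. The ramps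
`c (2m - n) / m²` from below and `D / (2m - n + 1)` from above are preserved by every step,
because `x / (1 + x)` is increasing and `x - x² ≤ x / (1 + x)`; at `n = m` they give `c / m`
and `D / (m + 1)`.
-/

lemma div_one_add_le_div_one_add {x y : ℝ} (hx : 0 ≤ x) (hxy : x ≤ y) :
    x / (1 + x) ≤ y / (1 + y) := by
  rw [div_le_div_iff₀ (by linarith) (by linarith)]
  linarith

lemma sub_sq_le_div_one_add {x : ℝ} (hx : 0 ≤ x) : x - x ^ 2 ≤ x / (1 + x) := by
  rw [le_div_iff₀ (by linarith)]
  nlinarith [pow_nonneg hx 3]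

lemma div_one_add_le_one {x : ℝ} (hx : 0 ≤ x) : x / (1 + x) ≤ 1 :=
  (div_le_one (by linarith)).2 (by linarith)

lemma lower_rec_step {a b c m k j y : ℝ} (hb : 0 ≤ b) (hc : 0 ≤ c) (hca : 4 * (c + c ^ 2) ≤ a)
    (hk : 0 ≤ k) (hkm : k ≤ m) (hj : 0 < j) (hjm : j ≤ 2 * m) (hy : c * k / m ^ 2 ≤ y) :
    c * (k + 1) / m ^ 2 ≤ a / j ^ 2 + (1 + b / j) * (y / (1 + y)) := by
  have hm : 0 < m := by linarith
  set x := c * k / m ^ 2 with hx_def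
  have hx : 0 ≤ x := by positivity
  have hx_sq : x ^ 2 ≤ c ^ 2 / m ^ 2 := by
    have : x ≤ c / m := by
      rw [hx_def, div_le_div_iff₀ (by positivity) hm]
      nlinarith [mul_le_mul_of_nonneg_left hkm (mul_nonneg hc hm.le)]
    calc x ^ 2 ≤ (c / m) ^ 2 := pow_le_pow_left₀ hx this 2
      _ = c ^ 2 / m ^ 2 := by ring
  have ha_j : a / (4 * m ^ 2) ≤ a / j ^ 2 := by
    apply div_le_div_of_nonneg_left (by nlinarith) (by positivity)
    nlinarith
  have hfrac : x - x ^ 2 ≤ y / (1 + y) :=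
    (sub_sq_le_div_one_add hx).trans (div_one_add_le_div_one_add hx hy)
  have hgrowth : y / (1 + y) ≤ (1 + b / j) * (y / (1 + y)) :=
    le_mul_of_one_le_left (div_nonneg (hx.trans hy) (by linarith [hx.trans hy]))
      (by linarith [div_nonneg hb hj.le])
  have hgain : c / m ^ 2 + c ^ 2 / m ^ 2 ≤ a / (4 * m ^ 2) := by
    rw [← add_div, div_le_div_iff₀ (by positivity) (by positivity)]
    nlinarith [sq_nonneg m]
  calc c * (k + 1) / m ^ 2 = x + c / m ^ 2 := by ring
    _ ≤ a / j ^ 2 + (x - x ^ 2) := by linarith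
    _ ≤ _ := by linarith

lemma upper_rec_step {A B D u j y : ℝ} (hA : 0 ≤ A) (hB : 0 ≤ B) (hD : A + B + 1 ≤ D)
    (hu : 0 < u) (huj : u + 1 ≤ j) (hy0 : 0 ≤ y) (hy : y ≤ D / u) :
    A / j ^ 2 + (1 + B / j) * (y / (1 + y)) ≤ D / (u + 1) := by
  have hD0 : 0 < D := by linarith
  have hfrac : y / (1 + y) ≤ D / (u + D) := by
    calc y / (1 + y) ≤ D / u / (1 + D / u) := div_one_add_le_div_one_add hy0 hy
      _ = D / (u + D) := by field_simp
  have hAj : A / j ^ 2 ≤ A / (u + 1) ^ 2 :=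
    div_le_div_of_nonneg_left hA (by positivity) (pow_le_pow_left₀ (by positivity) huj 2)
  have hBj : 1 + B / j ≤ 1 + B / (u + 1) := by
    gcongr
  calc A / j ^ 2 + (1 + B / j) * (y / (1 + y))
      ≤ A / (u + 1) ^ 2 + (1 + B / (u + 1)) * (D / (u + D)) := by
        gcongr
    _ ≤ D / (u + 1) := by
        have hu1 : 0 < u + 1 := by linarith
        rw [show A / (u + 1) ^ 2 + (1 + B / (u + 1)) * (D / (u + D))
            = (A * (u + D) + (u + 1 + B) * D * (u + 1)) / ((u + 1) ^ 2 * (u + D)) by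
              field_simp,
          div_le_div_iff₀ (by positivity) hu1]
        have hD1 : 0 ≤ D - 1 := by linarith
        have hDAB : 0 ≤ D - 1 - A - B := by linarith
        nlinarith [mul_nonneg (mul_nonneg (mul_nonneg hA hu.le) hD1) hu1.le,
          mul_nonneg (mul_nonneg hD0.le (mul_self_nonneg (u + 1))) hDAB]

lemma upper_rec_le_const {A B j y : ℝ} (hA : 0 ≤ A) (hB : 0 ≤ B) (hj : 1 ≤ j) (hy : 0 ≤ y) :
    A / j ^ 2 + (1 + B / j) * (y / (1 + y)) ≤ A + B + 1 := by
  have hAj : A / j ^ 2 ≤ A := div_le_self hA (one_le_pow₀ hj)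
  have hBj : B / j ≤ B := div_le_self hB hj
  have : (1 + B / j) * (y / (1 + y)) ≤ 1 + B / j :=
    mul_le_of_le_one_right (by positivity) (div_one_add_le_one hy)
  linarith

section Ramp

variable {lam : ℕ → ℝ} {m : ℕ}

lemma lower_rec_ramp {a b c : ℝ} (hb : 0 ≤ b) (hc : 0 ≤ c) (hca : 4 * (c + c ^ 2) ≤ a)
    (htop : 0 ≤ lam (2 * m))
    (hrec : ∀ n, m ≤ n → n < 2 * m →
      a / ((n : ℝ) + 1) ^ 2 + (1 + b / ((n : ℝ) + 1)) * (lam (n + 1) / (1 + lam (n + 1)))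
        ≤ lam n) :
    c / m ≤ lam m := by
  have hramp : c * (2 * m - m) / (m : ℝ) ^ 2 ≤ lam m := by
    refine Nat.decreasingInduction' (m := m) (n := 2 * m)
      (P := fun n => c * (2 * m - n) / (m : ℝ) ^ 2 ≤ lam n)
      (fun n hn hmn ih => ?_) (by omega) (by simpa using htop)
    have hnm : (n : ℝ) + 1 ≤ 2 * m := by exact_mod_cast hn
    have hmn' : (m : ℝ) ≤ n := by exact_mod_cast hmn
    simp only [Nat.cast_add, Nat.cast_one] at ih
    calc c * (2 * m - n) / (m : ℝ) ^ 2 = c * ((2 * m - (n + 1)) + 1) / (m : ℝ) ^ 2 := by ring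
      _ ≤ _ := lower_rec_step hb hc hca (by linarith) (by linarith) (by positivity) hnm ih
      _ ≤ lam n := hrec n hmn hn
  rcases Nat.eq_zero_or_pos m with rfl | hm
  · simpa using htop
  calc c / m = c * (2 * m - m) / (m : ℝ) ^ 2 := by field_simp; ring
    _ ≤ lam m := hramp

lemma upper_rec_ramp {A B D : ℝ} (hA : 0 ≤ A) (hB : 0 ≤ B) (hD : A + B + 1 ≤ D)
    (hnonneg : ∀ n, m ≤ n → 0 ≤ lam n) (htop : lam (2 * m) ≤ D)
    (hrec : ∀ n, m ≤ n → n < 2 * m →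
      lam n ≤
        A / ((n : ℝ) + 1) ^ 2 + (1 + B / ((n : ℝ) + 1)) * (lam (n + 1) / (1 + lam (n + 1)))) :
    lam m ≤ D / (m + 1) := by
  have hramp : lam m ≤ D / (2 * m - m + 1) := by
    refine Nat.decreasingInduction' (m := m) (n := 2 * m)
      (P := fun n => lam n ≤ D / (2 * m - n + 1))
      (fun n hn hmn ih => ?_) (by omega) (by simpa using htop)
    have hnm : (n : ℝ) + 1 ≤ 2 * m := by exact_mod_cast hn
    have hmn' : (m : ℝ) ≤ n := by exact_mod_cast hmn
    simp only [Nat.cast_add, Nat.cast_one, show (2 * m - (n + 1) + 1 : ℝ) = 2 * m - n by ring]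
      at ih
    exact (hrec n hmn hn).trans <| upper_rec_step hA hB hD (by linarith) (by linarith)
      (hnonneg _ (by omega)) ih
  calc lam m ≤ D / (2 * m - m + 1) := hramp
    _ = D / (m + 1) := by ring

end Ramp

/-- Recursive comparison lemma (exiting period, backward recursion): if
`a/m² + (1 + b/m)·λₘ/(1+λₘ) ≤ λ_{m−1} ≤ A/m² + (1 + B/m)·λₘ/(1+λₘ)` for all
`m ≥ m₀`, with `λₘ > 0`, then `λₘ ≍ 1/m`. -/
theorem lambda_asymptotics_exiting (a A b B : ℝ)
    (ha : 0 < a) (haA : a < A) (hb : 0 < b) (hbB : b < B)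
    (m₀ : ℕ) (hm₀ : 1 ≤ m₀) (lam : ℕ → ℝ)
    (hpos : ∀ m, m₀ ≤ m → 0 < lam m)
    (hrec : ∀ m : ℕ, m₀ + 1 ≤ m →
      a / (m : ℝ) ^ 2 + (1 + b / m) * (lam m / (1 + lam m)) ≤ lam (m - 1) ∧
      lam (m - 1) ≤ A / (m : ℝ) ^ 2 + (1 + B / m) * (lam m / (1 + lam m))) :
    ∃ c C : ℝ, 0 < c ∧ c < C ∧
      ∀ m, m₀ ≤ m → c / m ≤ lam m ∧ lam m ≤ C / m := by
  have hA : 0 < A := ha.trans haA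
  have hB : 0 ≤ B := (hb.trans hbB).le
  have hrec' : ∀ n, m₀ ≤ n →
      a / ((n : ℝ) + 1) ^ 2 + (1 + b / ((n : ℝ) + 1)) * (lam (n + 1) / (1 + lam (n + 1)))
        ≤ lam n ∧
      lam n ≤
        A / ((n : ℝ) + 1) ^ 2 + (1 + B / ((n : ℝ) + 1)) * (lam (n + 1) / (1 + lam (n + 1))) :=
    fun n hn => by simpa using hrec (n + 1) (by omega)
  set c := min (a / 8) 1
  have hc : 0 < c := lt_min (by positivity) one_pos
  have hc1 : c ≤ 1 := min_le_right _ _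
  have hca : 4 * (c + c ^ 2) ≤ a := by nlinarith [min_le_left (a / 8) 1]
  refine ⟨c, A + B + 1, hc, by linarith, fun m hm => ⟨?_, ?_⟩⟩
  · exact lower_rec_ramp hb.le hc.le hca (hpos _ (by omega)).le
      fun n hn _ => (hrec' n (by omega)).1
  · have htop : lam (2 * m) ≤ A + B + 1 :=
      (hrec' _ (by omega)).2.trans <|
        upper_rec_le_const hA.le hB (by linarith) (hpos _ (by omega)).le
    have hm1 : (0 : ℝ) < m := by exact_mod_cast (show 0 < m by omega)
    exact (upper_rec_ramp hA.le hB le_rfl (fun n hn => (hpos n (by omega)).le) htop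
      fun n hn _ => (hrec' n (by omega)).2).trans <|
      div_le_div_of_nonneg_left (by positivity) hm1 (by linarith)
end
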